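/- Let n be even, and consider the RFM with continuous positive T-periodic rates such that for every i ∈ {0,2,…,n-2} there exists αᵢ > 0 with uᵢ(t) = αᵢ u_{i+1}(t) for all t. Then there is no gain of entrainment: R_P ≤ R_C. -/

import Mathlib

open MeasureTheory intervalIntegral Real Filter

/-!
Integrating the equation of site `j + 1` over a period shows that the flux
`Φ = ∫₀ᵀ u_j x_j (1 - x_{j+1})` does not depend on `j`, and `Φ / T = R_P`. Compare the equilibrium
`e` with the point `d` made of weighted time averages of the periodic solution. At odd sites the
averaged flux through `d` is exactly `Φ / T`. At an even site `j`, `u_j = α_j u_{j+1}` turns the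
outflow rate `∫ u_j (1 - x_{j+1})` into `ū_j T (1 - d_{j+1})`, and for the site equation
`ẋ = a (1 - x) - b x` the functions `x` and `x / (1 - x)` are similarly ordered while
`∫ b x / (1 - x) = ∫ a` (`log (1 - x)` is periodic), so Chebyshev's integral inequality gives
`∫ b x ≤ d_j ∫ b`: the averaged flux through `d` is at least `Φ / T`. Every averaged flux through `e`
equals `R_C`, so if `R_C < R_P` a descending induction from site `n` gives `e_j < d_j` for all `j`,
which fails at `j = 0`, where both are `1`.
-/

theorem eq_of_forall_lt_eq_succ {α : Type*} {f : ℕ → α} {n : ℕ} (h : ∀ j < n, f j = f (j + 1))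
    {j : ℕ} (hj : j ≤ n) : f j = f n :=
  Nat.decreasingInduction (motive := fun k _ => f k = f n) (fun k hk ih => (h k hk).trans ih) rfl hj

/-- If `c < Φ`, then `e_{j+1} ≤ d_{j+1}` forces `e_j < d_j`; descending from `n + 1` this
contradicts `d 0 ≤ e 0`. -/
theorem le_of_forall_le_flux {n : ℕ} {U e d : ℕ → ℝ} {c Φ : ℝ}
    (hU : ∀ j ≤ n, 0 < U j) (hd : ∀ j ≤ n, 0 ≤ d j) (he : ∀ j ≤ n, e (j + 1) < 1)
    (h0 : d 0 ≤ e 0) (htop : e (n + 1) ≤ d (n + 1))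
    (hc : ∀ j ≤ n, U j * e j * (1 - e (j + 1)) = c)
    (hΦ : ∀ j ≤ n, Φ ≤ U j * d j * (1 - d (j + 1))) : Φ ≤ c := by
  by_contra! hlt
  have step (j : ℕ) (hj : j ≤ n) (hle : e (j + 1) ≤ d (j + 1)) : e j < d j := by
    have hpos : 0 < U j * (1 - e (j + 1)) := mul_pos (hU j hj) (sub_pos.2 (he j hj))
    have : U j * e j * (1 - e (j + 1)) < U j * d j * (1 - e (j + 1)) :=
      calc U j * e j * (1 - e (j + 1)) = c := hc j hj
        _ < Φ := hlt
        _ ≤ U j * d j * (1 - d (j + 1)) := hΦ j hj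
        _ ≤ U j * d j * (1 - e (j + 1)) := by
          gcongr
          exact mul_nonneg (hU j hj).le (hd j hj)
    nlinarith
  have hle : ∀ k ≤ n + 1, e k ≤ d k := fun k hk =>
    Nat.decreasingInduction (motive := fun k _ => e k ≤ d k)
      (fun k hk ih => (step k (by omega) ih).le) htop hk
  exact (step 0 (Nat.zero_le n) (hle 1 (by omega))).not_ge h0

theorem integral_eq_zero_of_hasDerivAt_of_eq {F f : ℝ → ℝ} {a b : ℝ}
    (hF : ∀ t ∈ Set.uIcc a b, HasDerivAt F (f t) t) (hf : IntervalIntegrable f volume a b)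
    (hab : F a = F b) : ∫ t in a..b, f t = 0 := by
  rw [integral_eq_sub_of_hasDerivAt hF hf, hab, sub_self]

theorem integral_mul_integral_le_of_monovary {a b : ℝ} (hab : a ≤ b) {w g h : ℝ → ℝ}
    (hw : Continuous w) (hg : Continuous g) (hh : Continuous h) (hw0 : ∀ t, 0 ≤ w t)
    (hgh : Monovary g h) :
    (∫ t in a..b, w t * g t) * (∫ t in a..b, w t * h t)
      ≤ (∫ t in a..b, w t) * ∫ t in a..b, w t * (g t * h t) := by
  have hi : ∀ {f : ℝ → ℝ}, Continuous f → IntervalIntegrable f volume a b :=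
    fun hf => hf.intervalIntegrable a b
  set W := ∫ t in a..b, w t
  set X := ∫ t in a..b, w t * g t
  set Y := ∫ t in a..b, w t * h t
  set Z := ∫ t in a..b, w t * (g t * h t)
  have inner (s : ℝ) : ∫ t in a..b, w s * w t * ((g t - g s) * (h t - h s)) =
      w s * Z - w s * g s * Y - w s * h s * X + w s * (g s * h s) * W := by
    have expand : (fun t => w s * w t * ((g t - g s) * (h t - h s))) = fun t =>
        w s * (w t * (g t * h t)) - w s * g s * (w t * h t) - w s * h s * (w t * g t)
          + w s * (g s * h s) * w t := by
      ext t; ring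
    rw [expand, intervalIntegral.integral_add, intervalIntegral.integral_sub,
      intervalIntegral.integral_sub, intervalIntegral.integral_const_mul,
      intervalIntegral.integral_const_mul, intervalIntegral.integral_const_mul,
      intervalIntegral.integral_const_mul]
    all_goals exact hi (by fun_prop)
  have hnonneg : 0 ≤ ∫ s in a..b, ∫ t in a..b, w s * w t * ((g t - g s) * (h t - h s)) :=
    integral_nonneg hab fun s _ => integral_nonneg hab fun t _ =>
      mul_nonneg (mul_nonneg (hw0 s) (hw0 t)) (hgh.sub_mul_sub_nonneg s t)
  rw [integral_congr fun s _ => inner s, intervalIntegral.integral_add,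
    intervalIntegral.integral_sub, intervalIntegral.integral_sub, intervalIntegral.integral_mul_const,
    intervalIntegral.integral_mul_const, intervalIntegral.integral_mul_const,
    intervalIntegral.integral_mul_const] at hnonneg
  · linarith
  all_goals exact hi (by fun_prop)

theorem monovary_self_div_one_sub {y : ℝ → ℝ} (hy : ∀ t, y t < 1) :
    Monovary (fun t => y t / (1 - y t)) y := fun s t hst => by
  have hs := sub_pos.2 (hy s)
  have ht := sub_pos.2 (hy t)
  rw [div_le_div_iff₀ hs ht]
  nlinarith

/-- For a periodic solution of `y' = a (1 - y) - b y`, the `b`-weighted mean of `y` is at most its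
`a`-weighted mean. -/
theorem integral_mul_integral_le_of_periodic_of_hasDerivAt {T : ℝ} (hT : 0 ≤ T) {a b y : ℝ → ℝ}
    (ha : Continuous a) (hb : Continuous b) (hb0 : ∀ t, 0 ≤ b t)
    (hy : ∀ t, HasDerivAt y (a t * (1 - y t) - b t * y t) t)
    (hy1 : ∀ t, y t < 1) (hper : y 0 = y T) :
    (∫ t in 0..T, b t * y t) * ∫ t in 0..T, a t
      ≤ (∫ t in 0..T, a t * y t) * ∫ t in 0..T, b t := by
  have hi : ∀ {f : ℝ → ℝ}, Continuous f → IntervalIntegrable f volume 0 T :=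
    fun hf => hf.intervalIntegrable 0 T
  have hyc : Continuous y := continuous_iff_continuousAt.2 fun t => (hy t).continuousAt
  have hy1' (t : ℝ) : 1 - y t ≠ 0 := (sub_pos.2 (hy1 t)).ne'
  set f := fun t => y t / (1 - y t) with hf
  have hfc : Continuous f := hyc.div (by fun_prop) hy1'
  have hbf : ∫ t in 0..T, b t * f t = ∫ t in 0..T, a t := by
    have hlog (t : ℝ) : HasDerivAt (fun s => log (1 - y s)) (b t * f t - a t) t := by
      convert ((hy t).const_sub 1).log (hy1' t) using 1
      simp only [hf]
      field_simp [hy1' t]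
      ring
    rw [← sub_eq_zero, ← intervalIntegral.integral_sub (hi (by fun_prop)) (hi ha)]
    exact integral_eq_zero_of_hasDerivAt_of_eq (fun t _ => hlog t) (hi (by fun_prop))
      (by rw [hper])
  have hay : ∫ t in 0..T, a t * y t = (∫ t in 0..T, a t) - ∫ t in 0..T, b t * y t := by
    have h := integral_eq_zero_of_hasDerivAt_of_eq (fun t _ => hy t) (hi (by fun_prop)) hper
    have expand : (fun t => a t * (1 - y t) - b t * y t) = fun t => a t - a t * y t - b t * y t := by
      ext t; ring
    rw [expand, intervalIntegral.integral_sub, intervalIntegral.integral_sub] at h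
    · linarith
    all_goals exact hi (by fun_prop)
  have hbyf : ∫ t in 0..T, b t * (y t * f t) = (∫ t in 0..T, b t * f t) - ∫ t in 0..T, b t * y t := by
    rw [← intervalIntegral.integral_sub (hi (by fun_prop)) (hi (by fun_prop))]
    congr 1
    ext t
    rw [hf]
    field_simp [hy1' t]
    ring
  have cheb := integral_mul_integral_le_of_monovary hT hb hyc hfc hb0
    (monovary_self_div_one_sub hy1).symm
  rw [hbyf, hbf] at cheb
  rw [hay]
  linarith

noncomputable def weightedMean (T : ℝ) (w f : ℝ → ℝ) : ℝ :=
  (∫ t in 0..T, w t * f t) / ∫ t in 0..T, w t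

theorem weightedMean_nonneg {T : ℝ} (hT : 0 ≤ T) {w f : ℝ → ℝ} (hw : ∀ t, 0 ≤ w t)
    (hf : ∀ t, 0 ≤ f t) : 0 ≤ weightedMean T w f :=
  div_nonneg (integral_nonneg hT fun t _ => mul_nonneg (hw t) (hf t))
    (integral_nonneg hT fun t _ => hw t)

namespace RFM

structure IsPeriodicSolution (n : ℕ) (T : ℝ) (u x : ℕ → ℝ → ℝ) : Prop where
  continuous_rate : ∀ i ≤ n, Continuous (u i)
  rate_pos : ∀ i ≤ n, ∀ t, 0 < u i t
  x_zero : ∀ t, x 0 t = 1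
  x_top : ∀ t, x (n + 1) t = 0
  hasDerivAt : ∀ j < n, ∀ t, HasDerivAt (x (j + 1))
    (u j t * x j t * (1 - x (j + 1) t) - u (j + 1) t * x (j + 1) t * (1 - x (j + 2) t)) t
  periodic : ∀ j < n, x (j + 1) 0 = x (j + 1) T
  mem_Ioo : ∀ i, 1 ≤ i → i ≤ n → ∀ t, x i t ∈ Set.Ioo 0 1

noncomputable def flux (T : ℝ) (u x : ℕ → ℝ → ℝ) (j : ℕ) : ℝ :=
  ∫ t in 0..T, u j t * x j t * (1 - x (j + 1) t)

/-- `d_0 = 1`; at an odd site `j` the `u_j`-weighted time average of `x_j`, at an even site `j ≥ 2`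
the average of `x_j` weighted by the inflow `u_{j-1} x_{j-1}`. -/
noncomputable def comparisonPoint (T : ℝ) (u x : ℕ → ℝ → ℝ) : ℕ → ℝ
  | 0 => 1
  | j + 1 => if Even j then weightedMean T (u (j + 1)) (x (j + 1))
      else weightedMean T (fun t => u j t * x j t) (x (j + 1))

variable {n : ℕ} {T : ℝ} {u x : ℕ → ℝ → ℝ}

namespace IsPeriodicSolution

theorem continuous (h : IsPeriodicSolution n T u x) {i : ℕ} (hi : i ≤ n + 1) :
    Continuous (x i) := by
  rcases i with _ | j
  · simpa only [funext h.x_zero] using continuous_const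
  rcases hi.lt_or_eq with hj | hj
  · exact continuous_iff_continuousAt.2 fun t => (h.hasDerivAt j (by omega) t).continuousAt
  · obtain rfl : j = n := by omega
    simpa only [funext h.x_top] using continuous_const

theorem mem_Icc (h : IsPeriodicSolution n T u x) {i : ℕ} (hi : i ≤ n + 1) (t : ℝ) :
    x i t ∈ Set.Icc 0 1 := by
  rcases i with _ | j
  · simp [h.x_zero]
  rcases hi.lt_or_eq with hj | hj
  · exact Set.Ioo_subset_Icc_self (h.mem_Ioo (j + 1) (by omega) (by omega) t)
  · obtain rfl : j = n := by omega
    simp [h.x_top]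

theorem continuous_flux_integrand (h : IsPeriodicSolution n T u x) {j : ℕ} (hj : j ≤ n) :
    Continuous fun t => u j t * x j t * (1 - x (j + 1) t) :=
  ((h.continuous_rate j hj).mul (h.continuous (by omega))).mul
    (continuous_const.sub (h.continuous (by omega)))

theorem flux_eq_flux_succ (h : IsPeriodicSolution n T u x) {j : ℕ} (hj : j < n) :
    flux T u x j = flux T u x (j + 1) := by
  rw [flux, flux, ← sub_eq_zero, ← intervalIntegral.integral_sub
    ((h.continuous_flux_integrand hj.le).intervalIntegrable 0 T)
    ((h.continuous_flux_integrand hj).intervalIntegrable 0 T)]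
  exact integral_eq_zero_of_hasDerivAt_of_eq (fun t _ => h.hasDerivAt j hj t)
    (((h.continuous_flux_integrand hj.le).sub
      (h.continuous_flux_integrand hj)).intervalIntegrable 0 T) (h.periodic j hj)

theorem flux_eq (h : IsPeriodicSolution n T u x) {j : ℕ} (hj : j ≤ n) :
    flux T u x j = flux T u x n :=
  eq_of_forall_lt_eq_succ (f := flux T u x) (fun _ hk => h.flux_eq_flux_succ hk) hj

theorem comparisonPoint_nonneg (h : IsPeriodicSolution n T u x) (hT : 0 ≤ T) {j : ℕ}
    (hj : j ≤ n) : 0 ≤ comparisonPoint T u x j := by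
  rcases j with _ | k
  · exact zero_le_one
  have hu (i) (hi : i ≤ n) (t : ℝ) : 0 ≤ u i t := (h.rate_pos i hi t).le
  have hx (i) (hi : i ≤ n + 1) (t : ℝ) : 0 ≤ x i t := (h.mem_Icc hi t).1
  rw [comparisonPoint]
  split_ifs
  · exact weightedMean_nonneg hT (hu _ hj) (hx _ (by omega))
  · exact weightedMean_nonneg hT (fun t => mul_nonneg (hu k (by omega) t) (hx k (by omega) t))
      (hx _ (by omega))

theorem comparisonPoint_top (h : IsPeriodicSolution n T u x) :
    comparisonPoint T u x (n + 1) = 0 := by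
  simp [comparisonPoint, weightedMean, h.x_top]

theorem integral_rate_pos (h : IsPeriodicSolution n T u x) (hT : 0 < T) {i : ℕ} (hi : i ≤ n) :
    0 < ∫ t in 0..T, u i t :=
  intervalIntegral_pos_of_pos ((h.continuous_rate i hi).intervalIntegrable 0 T)
    (h.rate_pos i hi) hT

theorem flux_eq_of_odd (h : IsPeriodicSolution n T u x) (hT : 0 < T) {j : ℕ} (hj : j < n)
    (hodd : Odd j) :
    flux T u x j = (∫ t in 0..T, u j t) * comparisonPoint T u x j
      * (1 - comparisonPoint T u x (j + 1)) := by
  obtain ⟨k, rfl⟩ := hodd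
  have hcont : Continuous fun t => u (2 * k + 1) t * x (2 * k + 1) t :=
    (h.continuous_rate _ hj.le).mul (h.continuous (by omega))
  have hP : 0 < ∫ t in 0..T, u (2 * k + 1) t * x (2 * k + 1) t :=
    intervalIntegral_pos_of_pos (hcont.intervalIntegrable 0 T)
      (fun t => mul_pos (h.rate_pos _ hj.le t) (h.mem_Ioo _ (by omega) hj.le t).1) hT
  have hflux : flux T u x (2 * k + 1) = (∫ t in 0..T, u (2 * k + 1) t * x (2 * k + 1) t)
      - ∫ t in 0..T, u (2 * k + 1) t * x (2 * k + 1) t * x (2 * k + 1 + 1) t := by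
    rw [flux, ← intervalIntegral.integral_sub (hcont.intervalIntegrable 0 T)
      ((hcont.fun_mul (h.continuous (i := 2 * k + 1 + 1) (by omega))).intervalIntegrable 0 T)]
    congr 1
    ext t
    ring
  have hodd : ¬Even (2 * k + 1) := by simp
  simp only [comparisonPoint, even_two_mul, if_true, hodd, if_false, weightedMean]
  rw [hflux]
  field_simp [(h.integral_rate_pos hT hj.le).ne', hP.ne']

theorem integral_rate_mul_one_sub_of_even (h : IsPeriodicSolution n T u x) (hT : 0 < T)
    (hn : Even n) (hprop : ∀ i, Even i → i + 2 ≤ n → ∃ α : ℝ, ∀ t, u i t = α * u (i + 1) t)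
    {j : ℕ} (hj : j ≤ n) (heven : Even j) :
    ∫ t in 0..T, u j t * (1 - x (j + 1) t)
      = (∫ t in 0..T, u j t) * (1 - comparisonPoint T u x (j + 1)) := by
  rcases hj.lt_or_eq with hj | rfl
  · have hj2 : j + 2 ≤ n := by
      obtain ⟨a, rfl⟩ := heven
      obtain ⟨b, rfl⟩ := hn
      omega
    obtain ⟨α, hα⟩ := hprop j heven hj2
    have hcont := h.continuous_rate (j + 1) (by omega)
    have hU := h.integral_rate_pos hT (i := j + 1) (by omega)
    have hout : ∫ t in 0..T, u j t * (1 - x (j + 1) t) = α * ((∫ t in 0..T, u (j + 1) t)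
        - ∫ t in 0..T, u (j + 1) t * x (j + 1) t) := by
      rw [← intervalIntegral.integral_sub (hcont.intervalIntegrable 0 T)
        ((hcont.fun_mul (h.continuous (i := j + 1) (by omega))).intervalIntegrable 0 T),
        ← intervalIntegral.integral_const_mul]
      congr 1
      ext t
      rw [hα]
      ring
    have hrate : ∫ t in 0..T, u j t = α * ∫ t in 0..T, u (j + 1) t := by
      simp only [hα, intervalIntegral.integral_const_mul]
    rw [hout, hrate, comparisonPoint, if_pos heven, weightedMean]
    field_simp
  · simp [h.comparisonPoint_top, h.x_top]

theorem flux_le_of_even (h : IsPeriodicSolution n T u x) (hT : 0 < T)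
    (hn : Even n) (hprop : ∀ i, Even i → i + 2 ≤ n → ∃ α : ℝ, ∀ t, u i t = α * u (i + 1) t)
    {j : ℕ} (hj : j ≤ n) (heven : Even j) :
    flux T u x j ≤ (∫ t in 0..T, u j t) * comparisonPoint T u x j
      * (1 - comparisonPoint T u x (j + 1)) := by
  rw [mul_right_comm, ← h.integral_rate_mul_one_sub_of_even hT hn hprop hj heven]
  obtain rfl | ⟨k, rfl⟩ : j = 0 ∨ ∃ k, j = k + 2 := by
    obtain ⟨a, rfl⟩ := heven
    rcases a with _ | a
    · exact .inl rfl
    · exact .inr ⟨2 * a, by ring⟩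
  · simp [flux, comparisonPoint, h.x_zero]
  set a := fun t => u (k + 1) t * x (k + 1) t
  set b := fun t => u (k + 2) t * (1 - x (k + 3) t)
  have ha : Continuous a := (h.continuous_rate _ (by omega)).fun_mul (h.continuous (by omega))
  have hb : Continuous b :=
    (h.continuous_rate _ hj).fun_mul (continuous_const.sub (h.continuous (by omega)))
  have hb0 (t : ℝ) : 0 ≤ b t :=
    mul_nonneg (h.rate_pos _ hj t).le (sub_nonneg.2 (h.mem_Icc (i := k + 3) (by omega) t).2)
  have hA : 0 < ∫ t in 0..T, a t :=
    intervalIntegral_pos_of_pos (ha.intervalIntegrable 0 T)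
      (fun t => mul_pos (h.rate_pos _ (by omega) t) (h.mem_Ioo _ (by omega) (by omega) t).1) hT
  have key := integral_mul_integral_le_of_periodic_of_hasDerivAt hT.le ha hb hb0
    (fun t => (h.hasDerivAt (k + 1) (by omega) t).congr_deriv (by ring))
    (fun t => (h.mem_Ioo (k + 2) (by omega) hj t).2) (h.periodic (k + 1) (by omega))
  have hodd : ¬Even (k + 1) := by simpa [Nat.even_add_one] using heven
  have hflux : flux T u x (k + 2) = ∫ t in 0..T, b t * x (k + 2) t := by
    simp only [flux, b]
    congr 1
    ext t
    ring
  rw [comparisonPoint, if_neg hodd, weightedMean, ← mul_div_assoc, le_div_iff₀ hA, hflux]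
  linarith

theorem flux_top_le (h : IsPeriodicSolution n T u x) (hT : 0 < T)
    (hn : Even n) (hprop : ∀ i, Even i → i + 2 ≤ n → ∃ α : ℝ, ∀ t, u i t = α * u (i + 1) t)
    {j : ℕ} (hj : j ≤ n) :
    flux T u x n ≤ (∫ t in 0..T, u j t) * comparisonPoint T u x j
      * (1 - comparisonPoint T u x (j + 1)) := by
  rw [← h.flux_eq hj]
  rcases Nat.even_or_odd j with heven | hodd
  · exact h.flux_le_of_even hT hn hprop hj heven
  · have hjn : j < n := hj.lt_of_ne (by rintro rfl; exact Nat.not_even_iff_odd.2 hodd hn)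
    exact (h.flux_eq_of_odd hT hjn hodd).le

end IsPeriodicSolution

end RFM

theorem rfm_no_goe_even_evenpairs_general
    (n : ℕ) (T : ℝ) (hT : 0 < T)
    (u : ℕ → ℝ → ℝ) (x : ℕ → ℝ → ℝ) (e : ℕ → ℝ)
    (hu_cont : ∀ i, i ≤ n → Continuous (u i))
    (hu_pos : ∀ i, i ≤ n → ∀ t, 0 < u i t)
    (hx0 : ∀ t, x 0 t = 1) (hxtop : ∀ t, x (n+1) t = 0)
    (hxdiff : ∀ i, 1 ≤ i → i ≤ n → Differentiable ℝ (x i))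
    (hxper : ∀ i, 1 ≤ i → i ≤ n → ∀ t, x i (t + T) = x i t)
    (hxmem : ∀ i, 1 ≤ i → i ≤ n → ∀ t, x i t ∈ Set.Ioo (0:ℝ) 1)
    (hode : ∀ i, 1 ≤ i → i ≤ n → ∀ t,
      deriv (x i) t
        = u (i-1) t * x (i-1) t * (1 - x i t) - u i t * x i t * (1 - x (i+1) t))
    (he0 : e 0 = 1) (hetop : e (n+1) = 0)
    (hemem : ∀ i, 1 ≤ i → i ≤ n → e i ∈ Set.Ioo (0:ℝ) 1)
    (heq : ∀ i, 1 ≤ i → i ≤ n →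
      (1/T * ∫ t in (0:ℝ)..T, u (i-1) t) * e (i-1) * (1 - e i)
        = (1/T * ∫ t in (0:ℝ)..T, u i t) * e i * (1 - e (i+1)))
    (heven : Even n)
    (hprop : ∀ i, Even i → i ≤ n - 2 →
      ∃ α : ℝ, 0 < α ∧ ∀ t, u i t = α * u (i+1) t) :
    1/T * ∫ t in (0:ℝ)..T, u n t * x n t ≤ (1/T * ∫ t in (0:ℝ)..T, u n t) * e n := by
  have hsol : RFM.IsPeriodicSolution n T u x :=
    { continuous_rate := hu_cont
      rate_pos := hu_pos
      x_zero := hx0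
      x_top := hxtop
      hasDerivAt := fun j hj t => by
        simpa [hode (j + 1) (by omega) hj t] using (hxdiff (j + 1) (by omega) hj t).hasDerivAt
      periodic := fun j hj => by simpa using (hxper (j + 1) (by omega) hj 0).symm
      mem_Ioo := hxmem }
  have hbal (j : ℕ) (hj : j ≤ n) : (1 / T * ∫ t in 0..T, u j t) * e j * (1 - e (j + 1))
      = (1 / T * ∫ t in 0..T, u n t) * e n * (1 - e (n + 1)) :=
    eq_of_forall_lt_eq_succ (f := fun j => (1 / T * ∫ t in 0..T, u j t) * e j * (1 - e (j + 1)))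
      (fun j hj => by simpa only [Nat.add_sub_cancel] using heq (j + 1) (by omega) hj) hj
  have he1 (j : ℕ) (hj : j ≤ n) : e (j + 1) < 1 := by
    rcases hj.lt_or_eq with hj | rfl
    exacts [(hemem (j + 1) (by omega) hj).2, by simp [hetop]]
  have hprop' (i : ℕ) (hi : Even i) (hin : i + 2 ≤ n) : ∃ α : ℝ, ∀ t, u i t = α * u (i + 1) t :=
    (hprop i hi (by omega)).imp fun _ => And.right
  have key := le_of_forall_le_flux (Φ := 1 / T * RFM.flux T u x n)
    (fun j hj => mul_pos (by positivity) (hsol.integral_rate_pos hT hj))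
    (fun j hj => hsol.comparisonPoint_nonneg hT.le hj) he1
    (by rw [he0]; rfl) (by rw [hetop, hsol.comparisonPoint_top]) hbal
    fun j hj => by simpa only [mul_assoc] using
      mul_le_mul_of_nonneg_left (hsol.flux_top_le hT heven hprop' hj) (one_div_nonneg.2 hT.le)
  simpa [RFM.flux, hxtop, hetop] using key

theorem rfm_no_goe_even_evenpairs
    (n : ℕ) (hn : 1 ≤ n) (T : ℝ) (hT : 0 < T)
    (u : ℕ → ℝ → ℝ) (x : ℕ → ℝ → ℝ) (e : ℕ → ℝ)
    (hu_cont : ∀ i, i ≤ n → Continuous (u i))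
    (hu_pos : ∀ i, i ≤ n → ∀ t, 0 < u i t)
    (hu_per : ∀ i, i ≤ n → ∀ t, u i (t + T) = u i t)
    (hx0 : ∀ t, x 0 t = 1) (hxtop : ∀ t, x (n+1) t = 0)
    (hxdiff : ∀ i, 1 ≤ i → i ≤ n → Differentiable ℝ (x i))
    (hxper : ∀ i, 1 ≤ i → i ≤ n → ∀ t, x i (t + T) = x i t)
    (hxmem : ∀ i, 1 ≤ i → i ≤ n → ∀ t, x i t ∈ Set.Ioo (0:ℝ) 1)
    (hode : ∀ i, 1 ≤ i → i ≤ n → ∀ t,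
      deriv (x i) t
        = u (i-1) t * x (i-1) t * (1 - x i t) - u i t * x i t * (1 - x (i+1) t))
    (he0 : e 0 = 1) (hetop : e (n+1) = 0)
    (hemem : ∀ i, 1 ≤ i → i ≤ n → e i ∈ Set.Ioo (0:ℝ) 1)
    (heq : ∀ i, 1 ≤ i → i ≤ n →
      (1/T * ∫ t in (0:ℝ)..T, u (i-1) t) * e (i-1) * (1 - e i)
        = (1/T * ∫ t in (0:ℝ)..T, u i t) * e i * (1 - e (i+1)))
    (heven : Even n)
    (hprop : ∀ i, Even i → i ≤ n - 2 →
      ∃ α : ℝ, 0 < α ∧ ∀ t, u i t = α * u (i+1) t) :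
    1/T * ∫ t in (0:ℝ)..T, u n t * x n t ≤ (1/T * ∫ t in (0:ℝ)..T, u n t) * e n :=
  rfm_no_goe_even_evenpairs_general n T hT u x e hu_cont hu_pos hx0 hxtop hxdiff hxper hxmem hode
    he0 hetop hemem heq heven hprop
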